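/- arXiv:1705.06018 — 2 statements merged into one kernel-verified Lean document; each statement's English description precedes it below -/
import Mathlib

section
/- For all real x, the formal power series identity e^{W(q)x}/(1-W(q)) = \sum_{n=0}^{\infty} (n+x)^n q^n/n! holds, where W(q) = \sum_{n=1}^{\infty} n^{n-1} q^n/n! is the tree function. -/
/-!
Write `A_x = ∑ x (x+n)^{n-1} qⁿ/n!` for the exponential series of the Abel polynomials and
`T_y = ∑ (n+y)ⁿ qⁿ/n!`. Abel's identity `∑ₖ C(n,k) x (x+k)^{k-1} (n-k+y)^{n-k} = (n+x+y)ⁿ` says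
exactly that `A_x T_y = T_{x+y}`. Since `W = q A_1` and `T_y - q T_{y+1} = A_y` coefficientwise,
this gives `(1 - W) T_x = A_x`. Finally `A_x` and `e^{xW}` solve the same linear differential
equation `F' = x W' F` with `F(0) = 1`, because `A_x' = x T_{x+1} = x T_1 A_x` and `W' = T_1`;
hence `e^{xW} = A_x = (1 - W) T_x`.
-/

open PowerSeries Finset

/-- The tree function `W(q) = ∑_{n≥1} n^{n-1} q^n / n!`. -/
noncomputable def treeW (K : Type*) [Field K] : PowerSeries K :=
  PowerSeries.mk fun n => if n = 0 then 0 else (n : K) ^ (n - 1) / (n.factorial : K)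

/-- Formal exponential of a power series with zero constant term. -/
noncomputable def pexp {K : Type*} [Field K] (f : PowerSeries K) : PowerSeries K :=
  PowerSeries.mk fun n => ∑ k ∈ Finset.range (n + 1), PowerSeries.coeff n (f ^ k) / (k.factorial : K)

theorem sum_antidiagonal_neg_one_pow_mul_choose_mul_pow {R : Type*} [CommRing R] {j m : ℕ}
    (h : j < m) (x : R) :
    ∑ p ∈ antidiagonal m, (-1) ^ p.2 * (m.choose p.1 : R) * (x + p.1) ^ j = 0 := by
  have := congrFun (fwdDiff_iter_pow_eq_zero_of_lt (R := R) h) x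
  rw [fwdDiff_iter_eq_sum_shift] at this
  rw [Nat.sum_antidiagonal_eq_sum_range_succ (fun i k => (-1) ^ k * (m.choose i : R) * (x + i) ^ j)]
  simpa [zsmul_eq_mul] using this

theorem Polynomial.eq_zero_of_derivative_eq_zero_of_eval_eq_zero {R : Type*} [CommSemiring R]
    [IsAddTorsionFree R] {p : Polynomial R} (hd : Polynomial.derivative p = 0) {a : R}
    (ha : p.eval a = 0) : p = 0 := by
  rw [Polynomial.eq_C_of_derivative_eq_zero hd] at ha ⊢
  simpa using ha

theorem PowerSeries.eq_of_derivative_eq_mul {R : Type*} [CommRing R] [IsAddTorsionFree R]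
    {f g h : R⟦X⟧} (hf : d⁄dX R f = f * h) (hg : d⁄dX R g = g * h)
    (h0 : constantCoeff f = constantCoeff g) : f = g := by
  ext n
  induction n using Nat.strong_induction_on with
  | _ n ih =>
    cases n with
    | zero => simpa using h0
    | succ n =>
      have hn : coeff n (d⁄dX R f) = coeff n (d⁄dX R g) := by
        rw [hf, hg, coeff_mul, coeff_mul]
        refine sum_congr rfl fun p hp => ?_
        rw [ih p.1 (Finset.Nat.antidiagonal.fst_lt hp)]
      rw [coeff_derivative, coeff_derivative] at hn
      exact nsmul_right_injective n.succ_ne_zero (by simpa [nsmul_eq_mul, mul_comm] using hn)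

section Abel

variable {R : Type*} [CommRing R]

def abelPoly (x : R) : ℕ → R
  | 0 => 1
  | k + 1 => x * (x + (k + 1)) ^ k

theorem abelPoly_mul_add_pow (x : R) {k n : ℕ} (hk : k ≤ n + 1) :
    abelPoly x k * (x + k) ^ (n + 1 - k) = x * (x + k) ^ n := by
  cases k with
  | zero => simp [abelPoly, pow_succ']
  | succ k =>
    rw [abelPoly, Nat.cast_succ, mul_assoc, ← pow_add]
    congr 2
    omega

/-- At `y = -(n + 1 + x)` every term of the Abel sum is `± x (x + k)ⁿ`, so the sum is `x` times an
`(n + 1)`-st finite difference of a polynomial of degree `n`. -/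
theorem sum_antidiagonal_choose_mul_abelPoly_mul_pow_eq_zero (x : R) (n : ℕ) :
    ∑ p ∈ antidiagonal (n + 1),
      ((n + 1).choose p.1 : R) * abelPoly x p.1 * (p.2 + -((n + 1 : ℕ) + x)) ^ p.2 = 0 := by
  rw [← mul_zero x, ← sum_antidiagonal_neg_one_pow_mul_choose_mul_pow (Nat.lt_add_one n) x, mul_sum]
  refine sum_congr rfl fun ⟨i, j⟩ h => ?_
  rw [HasAntidiagonal.mem_antidiagonal] at h
  obtain rfl : j = n + 1 - i := by omega
  dsimp only
  rw [show ((n + 1 - i : ℕ) : R) + -((n + 1 : ℕ) + x) = -1 * (x + i) by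
      push_cast [Nat.cast_sub (show i ≤ n + 1 by omega)]; ring,
    mul_pow, mul_left_comm, mul_assoc, abelPoly_mul_add_pow x (show i ≤ n + 1 by omega)]
  ring

theorem sum_antidiagonal_choose_mul_abelPoly_mul_pow {K : Type*} [Field K] [CharZero K]
    (x y : K) (n : ℕ) :
    ∑ p ∈ antidiagonal n, (n.choose p.1 : K) * abelPoly x p.1 * (p.2 + y) ^ p.2 =
      (n + x + y) ^ n := by
  induction n generalizing y with
  | zero => simp [abelPoly]
  | succ n ih =>
    let P : Polynomial K := ∑ p ∈ antidiagonal (n + 1),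
      Polynomial.C ((n + 1).choose p.1 * abelPoly x p.1 : K) *
        (Polynomial.C (p.2 : K) + Polynomial.X) ^ p.2 -
      (Polynomial.C ((n + 1 : ℕ) + x) + Polynomial.X) ^ (n + 1)
    suffices hP : P = 0 by
      simpa [P, sub_eq_zero, Polynomial.eval_finsetSum] using congrArg (Polynomial.eval y) hP
    refine Polynomial.eq_zero_of_derivative_eq_zero_of_eval_eq_zero (a := -((n + 1 : ℕ) + x)) ?_ ?_
    · -- `P'(y)` is `n + 1` times the difference of the two sides of the identity at `(n, y + 1)`.
      have hchoose : ∀ p ∈ antidiagonal n,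
          ((n + 1).choose p.1 : K) * (p.2 + 1) = (n + 1) * n.choose p.1 := by
        rintro ⟨i, j⟩ h
        rw [HasAntidiagonal.mem_antidiagonal] at h
        subst h
        have := Nat.choose_mul_succ_eq (i + j) i
        rw [show i + j + 1 - i = j + 1 by omega] at this
        exact_mod_cast this.symm.trans (mul_comm _ _)
      refine Polynomial.funext fun y => ?_
      simp only [P, map_mul, map_natCast, Nat.sum_antidiagonal_succ', Nat.choose_self, Nat.cast_one,
        one_mul, CharP.cast_eq_zero, zero_add, pow_zero, mul_one, Nat.cast_add, map_add, map_one,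
        Polynomial.derivative_sub, Polynomial.derivative_C, map_sum,
        Polynomial.derivative_mul, Polynomial.derivative_natCast, zero_mul, mul_zero, add_zero,
        Polynomial.derivative_pow, add_tsub_cancel_right, Polynomial.derivative_one,
        Polynomial.derivative_X, Polynomial.eval_sub, Polynomial.eval_mul, Polynomial.eval_add,
        Polynomial.eval_natCast, Polynomial.eval_one, Polynomial.eval_pow, Polynomial.eval_C,
        Polynomial.eval_X, Polynomial.eval_zero, Polynomial.eval_finsetSum]
      rw [sub_eq_zero, show (n : K) + 1 + x + y = n + x + (y + 1) by ring, ← ih, mul_sum]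
      refine sum_congr rfl fun p hp => ?_
      linear_combination (abelPoly x p.1 * (p.2 + (y + 1)) ^ p.2) * hchoose p hp
    · simp only [P, Polynomial.eval_sub, Polynomial.eval_finsetSum, Polynomial.eval_mul,
        Polynomial.eval_pow, Polynomial.eval_add, Polynomial.eval_C, Polynomial.eval_X]
      rw [add_neg_cancel, zero_pow n.succ_ne_zero, sub_zero,
        sum_antidiagonal_choose_mul_abelPoly_mul_pow_eq_zero]

end Abel

theorem constantCoeff_treeW (K : Type*) [Field K] : constantCoeff (treeW K) = 0 := by
  simp [← coeff_zero_eq_constantCoeff_apply, treeW]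

section Series

variable {K : Type*} [Field K] [CharZero K]

theorem pexp_eq_subst_exp {f : K⟦X⟧} (hf : constantCoeff f = 0) : pexp f = (exp K).subst f := by
  ext n
  rw [pexp, coeff_mk, coeff_subst' (HasSubst.of_constantCoeff_zero' hf),
    finsum_eq_sum_of_support_subset _ (s := range (n + 1)) ?_]
  · refine sum_congr rfl fun k _ => ?_
    simp [coeff_exp, div_eq_inv_mul]
  · intro k hk
    rw [mem_coe, mem_range]
    by_contra! hkn
    refine hk ?_
    dsimp only
    rw [coeff_of_lt_order (φ := f ^ k), smul_zero]
    exact lt_of_lt_of_le (by exact_mod_cast hkn) (le_order_pow_of_constantCoeff_eq_zero k hf)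

theorem derivative_pexp {f : K⟦X⟧} (hf : constantCoeff f = 0) :
    d⁄dX K (pexp f) = pexp f * d⁄dX K f := by
  rw [pexp_eq_subst_exp hf, derivative_subst (HasSubst.of_constantCoeff_zero' hf), derivative_exp]

noncomputable def abelSeries (x : K) : K⟦X⟧ := mk fun n => abelPoly x n / n.factorial

noncomputable def selfPowSeries (y : K) : K⟦X⟧ := mk fun n => ((n : K) + y) ^ n / n.factorial

theorem abelSeries_mul_selfPowSeries (x y : K) :
    abelSeries x * selfPowSeries y = selfPowSeries (x + y) := by
  ext n
  simp only [coeff_mul, abelSeries, selfPowSeries, coeff_mk]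
  rw [← add_assoc, ← sum_antidiagonal_choose_mul_abelPoly_mul_pow, sum_div]
  refine sum_congr rfl fun ⟨i, j⟩ h => ?_
  rw [HasAntidiagonal.mem_antidiagonal] at h
  subst h
  have hfact := Nat.add_choose_mul_factorial_mul_factorial i j
  rw [← Nat.choose_symm_add] at hfact
  have hchoose : ((i + j).choose i : K) ≠ 0 := by
    exact_mod_cast (Nat.choose_pos (Nat.le_add_right i j)).ne'
  dsimp only
  rw [← hfact]
  push_cast
  field_simp

theorem treeW_eq_X_mul_abelSeries : treeW K = X * abelSeries 1 := by
  ext n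
  cases n with
  | zero => simp [treeW]
  | succ n =>
    rw [coeff_succ_X_mul, treeW, abelSeries, coeff_mk, coeff_mk]
    cases n with
    | zero => simp [abelPoly]
    | succ n =>
      have : (n : K) + 1 + 1 ≠ 0 := by exact_mod_cast (n + 1).succ_ne_zero
      simp only [abelPoly, Nat.factorial_succ]
      push_cast
      field_simp
      ring

theorem selfPowSeries_sub_X_mul_selfPowSeries (y : K) :
    selfPowSeries y - X * selfPowSeries (1 + y) = abelSeries y := by
  ext n
  cases n with
  | zero => simp [selfPowSeries, abelSeries, abelPoly]
  | succ n =>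
    simp only [map_sub, coeff_succ_X_mul, selfPowSeries, abelSeries, abelPoly, coeff_mk,
      Nat.factorial_succ]
    push_cast
    field_simp
    ring

theorem one_sub_treeW_mul_selfPowSeries (y : K) :
    (1 - treeW K) * selfPowSeries y = abelSeries y := by
  rw [treeW_eq_X_mul_abelSeries, sub_mul, one_mul, mul_assoc, abelSeries_mul_selfPowSeries,
    selfPowSeries_sub_X_mul_selfPowSeries]

theorem derivative_abelSeries (x : K) : d⁄dX K (abelSeries x) = x • selfPowSeries (x + 1) := by
  ext n
  simp only [coeff_derivative, abelSeries, selfPowSeries, abelPoly, coeff_mk, map_smul, smul_eq_mul,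
    Nat.factorial_succ]
  push_cast
  field_simp
  ring

theorem derivative_treeW : d⁄dX K (treeW K) = selfPowSeries 1 := by
  ext n
  simp only [coeff_derivative, treeW, selfPowSeries, coeff_mk, Nat.factorial_succ]
  push_cast
  field_simp

theorem pexp_smul_treeW (x : K) : pexp (x • treeW K) = abelSeries x := by
  have hc : constantCoeff (x • treeW K) = 0 := by simp [constantCoeff_treeW]
  refine eq_of_derivative_eq_mul (derivative_pexp hc) ?_ ?_
  · rw [derivative_abelSeries, Derivation.map_smul, derivative_treeW, mul_smul_comm,
      abelSeries_mul_selfPowSeries]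
  · rw [← coeff_zero_eq_constantCoeff_apply, ← coeff_zero_eq_constantCoeff_apply]
    simp [pexp, abelSeries, abelPoly]

end Series

theorem stmt0 (x : ℝ) :
    pexp (x • treeW ℝ) * (1 - treeW ℝ)⁻¹
      = PowerSeries.mk fun n => ((n : ℝ) + x) ^ n / (n.factorial : ℝ) := by
  have hW : constantCoeff (1 - treeW ℝ) ≠ 0 := by simp [constantCoeff_treeW]
  rw [pexp_smul_treeW, ← one_sub_treeW_mul_selfPowSeries, mul_right_comm,
    PowerSeries.mul_inv_cancel _ hW, one_mul, selfPowSeries]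
end

section
/- Define Stirling-type numbers A_l^b by the identity (w+1)(w+2)\cdots(w+l) = \sum_{b=0}^{l} A_l^b w^b (with the empty product equal to 1 when l=0). Then for integers x \geq a \geq 0, A_x^{x-a} = \sum_{e=0}^{a} \sum_{f=0}^{e} (-1)^{f+a} C(e,f) C(x+e, a+e) C(x+a+1, a-e) f^{a+e}/e!. -/
open Polynomial Finset

/-- The Stirling-type numbers `A_l^b`, the coefficient of `w^b` in
`(w+1)(w+2)⋯(w+l)`. -/
noncomputable def A (l b : ℕ) : ℚ :=
  (∏ k ∈ Finset.range l, (Polynomial.X + Polynomial.C ((k : ℚ) + 1))).coeff b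

/-- Stirling numbers of the second kind. -/
def St : ℕ → ℕ → ℕ
  | 0, 0 => 1
  | 0, _+1 => 0
  | _+1, 0 => 0
  | n+1, k+1 => (k+1) * St n (k+1) + St n k

@[simp] lemma St_zero_zero : St 0 0 = 1 := rfl
@[simp] lemma St_zero_succ (k : ℕ) : St 0 (k+1) = 0 := rfl
@[simp] lemma St_succ_zero (n : ℕ) : St (n+1) 0 = 0 := rfl
lemma St_succ_succ (n k : ℕ) : St (n+1) (k+1) = (k+1) * St n (k+1) + St n k := rfl

lemma St_eq_zero_of_lt : ∀ {n k : ℕ}, n < k → St n k = 0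
  | 0, 0, h => absurd h (lt_irrefl 0)
  | 0, _+1, _ => rfl
  | _+1, 0, h => absurd h (Nat.not_lt_zero _).elim
  | n+1, k+1, h => by
      rw [St_succ_succ, St_eq_zero_of_lt (by omega : n < k),
        St_eq_zero_of_lt (by omega : n < k+1)]
      simp

@[simp] lemma St_self : ∀ n : ℕ, St n n = 1
  | 0 => rfl
  | n+1 => by rw [St_succ_succ, St_eq_zero_of_lt (Nat.lt_succ_self n), St_self n]; simp

/-- 2-associated Stirling numbers of the second kind (all blocks of size ≥ 2). -/
def b2 : ℕ → ℕ → ℕ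
  | 0, 0 => 1
  | 0, _+1 => 0
  | 1, _ => 0
  | n+2, 0 => 0
  | n+2, k+1 => (k+1) * b2 (n+1) (k+1) + (n+1) * b2 n k

@[simp] lemma b2_zero_zero : b2 0 0 = 1 := rfl
@[simp] lemma b2_zero_succ (k : ℕ) : b2 0 (k+1) = 0 := rfl
@[simp] lemma b2_one (k : ℕ) : b2 1 k = 0 := rfl
@[simp] lemma b2_succ_zero (n : ℕ) : b2 (n+2) 0 = 0 := rfl
lemma b2_succ_succ (n k : ℕ) :
    b2 (n+2) (k+1) = (k+1) * b2 (n+1) (k+1) + (n+1) * b2 n k := rfl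

@[simp] lemma b2_succ_zero' (n : ℕ) : b2 (n+1) 0 = 0 := by
  cases n with
  | zero => rfl
  | succ n => rfl

lemma b2_eq_zero_of_lt : ∀ n k, n < 2*k → b2 n k = 0
  | 0, 0, h => absurd h (by omega)
  | 0, k+1, _ => rfl
  | 1, k, h => by cases k <;> rfl
  | n+2, 0, h => absurd h (by omega)
  | n+2, k+1, h => by
      rw [b2_succ_succ, b2_eq_zero_of_lt (n+1) (k+1) (by omega),
        b2_eq_zero_of_lt n k (by omega)]
      simp

lemma EXP : ∀ a k : ℕ, St (a+k) k = ∑ j ∈ range (a+1), (a+k).choose (a+j) * b2 (a+j) j := by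
  intro a
  induction a with
  | zero =>
    intro k
    simp [St_self]
  | succ a iha =>
    intro k
    induction k with
    | zero =>
      rw [Finset.sum_eq_zero]
      · cases a <;> simp [St_succ_zero]
      · intro j hj
        rcases Nat.eq_zero_or_pos j with rfl | hj0
        · simp
        · rw [Nat.choose_eq_zero_of_lt (by omega)]
          simp
    | succ k ihk =>
      have hL : St (a+1+(k+1)) (k+1) = (k+1) * St (a+k+1) (k+1) + St (a+k+1) k := by
        have : a+1+(k+1) = (a+k+1)+1 := by ring
        rw [this, St_succ_succ]
      -- RHS pascal split
      have hR : ∑ j ∈ range (a+2), (a+1+(k+1)).choose (a+1+j) * b2 (a+1+j) j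
          = (∑ j ∈ range (a+2), (a+1+k).choose (a+1+j) * b2 (a+1+j) j)
            + ∑ j ∈ range (a+2), (a+k+1).choose (a+j) * b2 (a+1+j) j := by
        rw [← Finset.sum_add_distrib]
        apply Finset.sum_congr rfl
        intro j _
        rw [show a+1+(k+1) = (a+k+1)+1 by ring, show a+1+j = (a+j)+1 by ring,
          Nat.choose_succ_succ]
        rw [show a+1+k = a+k+1 by ring, Nat.succ_eq_add_one]
        ring
      -- the key step (★)
      have star : ∑ j ∈ range (a+2), (a+k+1).choose (a+j) * b2 (a+1+j) j
          = (k+1) * ∑ j ∈ range (a+1), (a+k+1).choose (a+j) * b2 (a+j) j := by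
        rw [Finset.sum_range_succ' _ (a+1)]
        -- j = 0 term vanishes
        rw [show b2 (a+1+0) 0 = 0 from b2_succ_zero' a, mul_zero, add_zero]
        -- expand b2 (a+2+i) (i+1)
        have hexp : ∀ i, b2 (a+1+(i+1)) (i+1)
            = (i+1) * b2 (a+1+i) (i+1) + (a+1+i) * b2 (a+i) i := by
          intro i
          rw [show a+1+(i+1) = (a+i)+2 by ring, b2_succ_succ,
            show a+i+1 = a+1+i by ring]
        calc ∑ i ∈ range (a+1), (a+k+1).choose (a+(i+1)) * b2 (a+1+(i+1)) (i+1)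
            = ∑ i ∈ range (a+1), ((i+1) * ((a+k+1).choose (a+i+1) * b2 (a+1+i) (i+1))
                + (k+1-i) * ((a+k+1).choose (a+i) * b2 (a+i) i)) := by
              apply Finset.sum_congr rfl
              intro i hi
              rw [show a+(i+1) = a+i+1 by ring, hexp i]
              have habs : (a+k+1).choose (a+i+1) * (a+i+1)
                  = (a+k+1).choose (a+i) * (k+1-i) := by
                rw [Nat.choose_succ_right_eq]
                congr 1
                omega
              calc (a+k+1).choose (a+i+1) * ((i+1) * b2 (a+1+i) (i+1) + (a+1+i) * b2 (a+i) i)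
                  = (i+1) * ((a+k+1).choose (a+i+1) * b2 (a+1+i) (i+1))
                    + ((a+k+1).choose (a+i+1) * (a+i+1)) * b2 (a+i) i := by ring
                _ = _ := by rw [habs]; ring
          _ = (∑ i ∈ range (a+1), (i+1) * ((a+k+1).choose (a+i+1) * b2 (a+1+i) (i+1)))
                + ∑ i ∈ range (a+1), (k+1-i) * ((a+k+1).choose (a+i) * b2 (a+i) i) := by
              rw [Finset.sum_add_distrib]
          _ = (∑ j ∈ range (a+1), j * ((a+k+1).choose (a+j) * b2 (a+j) j))
                + ∑ j ∈ range (a+1), (k+1-j) * ((a+k+1).choose (a+j) * b2 (a+j) j) := by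
              congr 1
              set g : ℕ → ℕ := fun j => j * ((a+k+1).choose (a+j) * b2 (a+j) j) with hg
              have h1 : ∀ i, (i+1) * ((a+k+1).choose (a+i+1) * b2 (a+1+i) (i+1)) = g (i+1) := by
                intro i
                simp only [hg, show a+(i+1) = a+i+1 by ring, show a+1+i = a+i+1 by ring]
              have h2 : ∑ j ∈ range (a+2), g j = ∑ i ∈ range (a+1), g (i+1) + g 0 :=
                Finset.sum_range_succ' g (a+1)
              have h3 : ∑ j ∈ range (a+2), g j = ∑ j ∈ range (a+1), g j + g (a+1) :=
                Finset.sum_range_succ g (a+1)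
              have hg0 : g 0 = 0 := by simp [hg]
              have hgtop : g (a+1) = 0 := by
                simp only [hg]
                rw [b2_eq_zero_of_lt (a+(a+1)) (a+1) (by omega)]
                ring
              calc ∑ i ∈ range (a+1), (i+1) * ((a+k+1).choose (a+i+1) * b2 (a+1+i) (i+1))
                  = ∑ i ∈ range (a+1), g (i+1) := by
                    apply Finset.sum_congr rfl; intro i _; rw [h1]
                _ = ∑ j ∈ range (a+1), g j := by omega
          _ = (k+1) * ∑ j ∈ range (a+1), (a+k+1).choose (a+j) * b2 (a+j) j := by
              rw [Finset.mul_sum, ← Finset.sum_add_distrib]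
              apply Finset.sum_congr rfl
              intro j hj
              rcases le_or_gt j (k+1) with hle | hlt
              · have : j + (k+1-j) = k+1 := by omega
                calc j * ((a+k+1).choose (a+j) * b2 (a+j) j)
                    + (k+1-j) * ((a+k+1).choose (a+j) * b2 (a+j) j)
                    = (j + (k+1-j)) * ((a+k+1).choose (a+j) * b2 (a+j) j) := by ring
                  _ = _ := by rw [this]
              · rw [Nat.choose_eq_zero_of_lt (by omega)]
                ring
      have e1 : St (a+k+1) (k+1) = ∑ j ∈ range (a+1), (a+k+1).choose (a+j) * b2 (a+j) j := by
        have := iha (k+1)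
        rwa [show a+(k+1) = a+k+1 by ring] at this
      have e2 : St (a+k+1) k = ∑ j ∈ range (a+1+1), (a+1+k).choose (a+1+j) * b2 (a+1+j) j := by
        rw [show a+k+1 = a+1+k by ring]
        exact ihk
      rw [hL, hR, star, e1, e2]
      ring

lemma Vdm (M L k : ℕ) : ∑ i ∈ range (k+1), M.choose i * L.choose (k-i) = (M+L).choose k := by
  rw [Nat.add_choose_eq, Finset.Nat.sum_antidiagonal_eq_sum_range_succ_mk]

lemma C1 (a N j : ℕ) (hj : j ≤ a) (hN2 : N ≤ 2*a) :
    ∑ e ∈ range (a+1), N.choose (a+e) * (2*a-N).choose (a-e) * (a+e).choose (a+j)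
      = N.choose (a+j) := by
  rcases lt_or_ge N (a+j) with hlt | hge
  · rw [Nat.choose_eq_zero_of_lt hlt, Finset.sum_eq_zero]
    intro e _
    rcases lt_or_ge e j with helt | hele
    · rw [Nat.choose_eq_zero_of_lt (by omega : a+e < a+j)]
      ring
    · rw [Nat.choose_eq_zero_of_lt (by omega : N < a+e)]
      ring
  · have hsum : ∑ e ∈ range j, N.choose (a+e) * (2*a-N).choose (a-e) * (a+e).choose (a+j)
        + ∑ e ∈ Finset.Ico j (a+1), N.choose (a+e) * (2*a-N).choose (a-e) * (a+e).choose (a+j)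
        = ∑ e ∈ range (a+1), N.choose (a+e) * (2*a-N).choose (a-e) * (a+e).choose (a+j) :=
      Finset.sum_range_add_sum_Ico _ (by omega)
    rw [← hsum, Finset.sum_eq_zero (fun e he => by
      rw [Nat.choose_eq_zero_of_lt (by simp at he; omega : a+e < a+j)]; ring), zero_add]
    rw [Finset.sum_Ico_eq_sum_range]
    have hper : ∀ i ∈ range (a+1-j),
        N.choose (a+(j+i)) * (2*a-N).choose (a-(j+i)) * (a+(j+i)).choose (a+j)
        = N.choose (a+j) * ((N-(a+j)).choose i * (2*a-N).choose ((a-j)-i)) := by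
      intro i _
      have harr : a-(j+i) = (a-j)-i := by omega
      rcases le_or_gt (a+(j+i)) N with hle | hgt
      · have := Nat.choose_mul (n := N) (k := a+(j+i)) (s := a+j) (by omega)
        rw [show a+(j+i) = a+j+i by ring] at this ⊢
        rw [mul_right_comm, this, show a+j+i-(a+j) = i by omega, harr]
        ring
      · rw [Nat.choose_eq_zero_of_lt hgt, Nat.choose_eq_zero_of_lt (by omega : N-(a+j) < i)]
        ring
    rw [Finset.sum_congr rfl hper, ← Finset.mul_sum]
    have : a+1-j = (a-j)+1 := by omega
    rw [this, Vdm]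
    rw [show N-(a+j) + (2*a-N) = a-j by omega, Nat.choose_self, mul_one]

lemma W1 (b T : ℕ) (h : b+1 ≤ T) :
    ∑ i ∈ range (b+1), (-1:ℚ)^(b-i) * (T.choose i) * ((T-1-i).choose (b-i)) = 1 := by
  classical
  set g : Polynomial ℚ := ∑ i ∈ range T, Polynomial.C ((T.choose i : ℚ) * (-1)^i)
      * ((1+X)^(T-1-i) * X^i) with hgdef
  have hg : (1+X) * g = 1 - (-X)^T := by
    rw [hgdef, Finset.mul_sum]
    have hterm : ∀ i ∈ range T, (1+X) * (Polynomial.C ((T.choose i : ℚ) * (-1)^i)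
        * ((1+X)^(T-1-i) * X^i)) = (-X)^i * (1+X)^(T-i) * (T.choose i : Polynomial ℚ) := by
      intro i hi
      simp only [Finset.mem_range] at hi
      have hpow : (1+X : Polynomial ℚ)^(T-i) = (1+X) * (1+X)^(T-1-i) := by
        rw [← pow_succ']
        congr 1
        omega
      rw [hpow, neg_pow]
      simp only [map_mul, map_pow, map_neg, map_one, Polynomial.C_eq_natCast]
      push_cast
      ring
    rw [Finset.sum_congr rfl hterm]
    have hap := add_pow (-X : Polynomial ℚ) (1+X) T
    rw [show (-X + (1+X) : Polynomial ℚ) = 1 by ring, one_pow] at hap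
    rw [Finset.sum_range_succ, Nat.sub_self, pow_zero, Nat.choose_self, Nat.cast_one,
      mul_one, mul_one] at hap
    linear_combination -hap
  have hgeom : (1+X) * (∑ k ∈ range T, (-X : Polynomial ℚ)^k) = 1 - (-X)^T := by
    have hgs := geom_sum_mul (-X : Polynomial ℚ) T
    linear_combination -hgs
  have hne : (1 + X : Polynomial ℚ) ≠ 0 := by
    intro hcon
    have := congrArg (fun p => Polynomial.coeff p 0) hcon
    simp at this
  have hg2 : g = ∑ k ∈ range T, (-X : Polynomial ℚ)^k := mul_left_cancel₀ hne (hg.trans hgeom.symm)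
  have hco := congrArg (fun p => Polynomial.coeff p b) hg2
  simp only [hgdef, Polynomial.finset_sum_coeff] at hco
  have hcoL : ∀ i ∈ range T,
      (Polynomial.C ((T.choose i : ℚ) * (-1)^i) * ((1+X)^(T-1-i) * X^i)).coeff b
      = if i ≤ b then ((T.choose i : ℚ) * (-1)^i) * ((T-1-i).choose (b-i) : ℚ) else 0 := by
    intro i _
    rw [← mul_assoc, Polynomial.coeff_mul_X_pow']
    by_cases hib : i ≤ b
    · rw [if_pos hib, if_pos hib, Polynomial.coeff_C_mul, Polynomial.coeff_one_add_X_pow]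
    · rw [if_neg hib, if_neg hib]
  rw [Finset.sum_congr rfl hcoL] at hco
  have hR : ∑ k ∈ range T, ((-X:Polynomial ℚ)^k).coeff b = (-1)^b := by
    have hper : ∀ k ∈ range T, ((-X:Polynomial ℚ)^k).coeff b
        = if k = b then (-1:ℚ)^b else 0 := by
      intro k _
      rw [neg_pow, show ((-1:Polynomial ℚ))^k = Polynomial.C ((-1:ℚ)^k) by simp,
        Polynomial.coeff_C_mul, Polynomial.coeff_X_pow]
      by_cases hkb : k = b
      · subst hkb; simp
      · simp [hkb, Ne.symm hkb]
    rw [Finset.sum_congr rfl hper, Finset.sum_ite_eq' (range T) b]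
    simp [Finset.mem_range.mpr (by omega : b < T)]
  rw [hR] at hco
  have hshrink : ∑ i ∈ range T, (if i ≤ b then ((T.choose i : ℚ) * (-1)^i)
        * ((T-1-i).choose (b-i) : ℚ) else 0)
      = ∑ i ∈ range (b+1), ((T.choose i : ℚ) * (-1)^i) * ((T-1-i).choose (b-i) : ℚ) := by
    rw [← Finset.sum_subset (Finset.range_subset_range.mpr h)]
    · apply Finset.sum_congr rfl
      intro i hi
      simp only [Finset.mem_range] at hi
      rw [if_pos (by omega)]
    · intro i _ hi
      simp only [Finset.mem_range] at hi
      rw [if_neg (by omega)]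
  rw [hshrink] at hco
  have hsq : ∀ i : ℕ, (-1:ℚ)^i * (-1)^i = 1 := by
    intro i
    rw [← pow_add, ← two_mul, pow_mul]
    norm_num
  calc ∑ i ∈ range (b+1), (-1:ℚ)^(b-i) * (T.choose i) * ((T-1-i).choose (b-i))
      = ∑ i ∈ range (b+1), (-1:ℚ)^b * (((T.choose i : ℚ) * (-1)^i)
          * ((T-1-i).choose (b-i) : ℚ)) := by
        apply Finset.sum_congr rfl
        intro i hi
        simp only [Finset.mem_range] at hi
        have h1 : (-1:ℚ)^(b-i) * (-1)^i = (-1)^b := by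
          rw [← pow_add]
          congr 1
          omega
        have h1' : (-1:ℚ)^(b-i) = (-1)^b * (-1)^i := by
          rw [← h1, mul_assoc, hsq, mul_one]
        rw [h1']
        ring
    _ = (-1:ℚ)^b * ∑ i ∈ range (b+1), ((T.choose i : ℚ) * (-1)^i)
          * ((T-1-i).choose (b-i) : ℚ) := by rw [Finset.mul_sum]
    _ = (-1:ℚ)^b * (-1)^b := by rw [hco]
    _ = 1 := hsq b

lemma DUAL1 (a N : ℕ) (h1 : a ≤ N) (h2 : N ≤ 2*a) :
    ∑ e ∈ range (a+1), N.choose (a+e) * (2*a-N).choose (a-e) * St (a+e) e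
      = St N (N-a) := by
  calc ∑ e ∈ range (a+1), N.choose (a+e) * (2*a-N).choose (a-e) * St (a+e) e
      = ∑ e ∈ range (a+1), ∑ j ∈ range (a+1),
          N.choose (a+e) * (2*a-N).choose (a-e) * ((a+e).choose (a+j) * b2 (a+j) j) := by
        apply Finset.sum_congr rfl
        intro e _
        rw [EXP a e, Finset.mul_sum]
    _ = ∑ j ∈ range (a+1), ∑ e ∈ range (a+1),
          N.choose (a+e) * (2*a-N).choose (a-e) * ((a+e).choose (a+j) * b2 (a+j) j) :=
        Finset.sum_comm
    _ = ∑ j ∈ range (a+1), N.choose (a+j) * b2 (a+j) j := by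
        apply Finset.sum_congr rfl
        intro j hj
        simp only [Finset.mem_range] at hj
        have hfac : ∑ e ∈ range (a+1),
            N.choose (a+e) * (2*a-N).choose (a-e) * ((a+e).choose (a+j) * b2 (a+j) j)
            = (∑ e ∈ range (a+1),
                N.choose (a+e) * (2*a-N).choose (a-e) * (a+e).choose (a+j)) * b2 (a+j) j := by
          rw [Finset.sum_mul]
          apply Finset.sum_congr rfl
          intro e _
          ring
        rw [hfac, C1 a N j (by omega) h2]
    _ = St N (N-a) := by
        have := (EXP a (N-a)).symm
        rwa [show a+(N-a) = N by omega] at this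

lemma DUAL2 (a t : ℕ) (ht : a+2 ≤ t) :
    ∑ e ∈ range (a+1), (-1:ℚ)^(a-e) * ((a+t-1).choose (a+e) : ℚ)
        * ((t-e-2).choose (a-e) : ℚ) * (St (a+e) e : ℚ)
      = (St (a+t-1) (t-1) : ℚ) := by
  calc ∑ e ∈ range (a+1), (-1:ℚ)^(a-e) * ((a+t-1).choose (a+e) : ℚ)
        * ((t-e-2).choose (a-e) : ℚ) * (St (a+e) e : ℚ)
      = ∑ e ∈ range (a+1), ∑ j ∈ range (a+1), (-1:ℚ)^(a-e) * ((a+t-1).choose (a+e) : ℚ)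
          * ((t-e-2).choose (a-e) : ℚ) * (((a+e).choose (a+j) * b2 (a+j) j : ℕ) : ℚ) := by
        apply Finset.sum_congr rfl
        intro e _
        rw [← Finset.mul_sum, ← Nat.cast_sum, ← EXP a e]
    _ = ∑ j ∈ range (a+1), ∑ e ∈ range (a+1), (-1:ℚ)^(a-e) * ((a+t-1).choose (a+e) : ℚ)
          * ((t-e-2).choose (a-e) : ℚ) * (((a+e).choose (a+j) * b2 (a+j) j : ℕ) : ℚ) :=
        Finset.sum_comm
    _ = ∑ j ∈ range (a+1), ((a+t-1).choose (a+j) : ℚ) * (b2 (a+j) j : ℚ) := by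
        apply Finset.sum_congr rfl
        intro j hj
        simp only [Finset.mem_range] at hj
        -- split off e < j
        have hsplit : ∑ e ∈ range j, (-1:ℚ)^(a-e) * ((a+t-1).choose (a+e) : ℚ)
              * ((t-e-2).choose (a-e) : ℚ) * (((a+e).choose (a+j) * b2 (a+j) j : ℕ) : ℚ)
            + ∑ e ∈ Finset.Ico j (a+1), (-1:ℚ)^(a-e) * ((a+t-1).choose (a+e) : ℚ)
              * ((t-e-2).choose (a-e) : ℚ) * (((a+e).choose (a+j) * b2 (a+j) j : ℕ) : ℚ)
            = ∑ e ∈ range (a+1), (-1:ℚ)^(a-e) * ((a+t-1).choose (a+e) : ℚ)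
              * ((t-e-2).choose (a-e) : ℚ) * (((a+e).choose (a+j) * b2 (a+j) j : ℕ) : ℚ) :=
          Finset.sum_range_add_sum_Ico _ (by omega)
        rw [← hsplit, Finset.sum_eq_zero (fun e he => by
          simp only [Finset.mem_range] at he
          rw [Nat.choose_eq_zero_of_lt (by omega : a+e < a+j)]
          simp), zero_add, Finset.sum_Ico_eq_sum_range]
        have hper : ∀ i ∈ range (a+1-j),
            (-1:ℚ)^(a-(j+i)) * ((a+t-1).choose (a+(j+i)) : ℚ)
              * ((t-(j+i)-2).choose (a-(j+i)) : ℚ)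
              * (((a+(j+i)).choose (a+j) * b2 (a+j) j : ℕ) : ℚ)
            = ((a+t-1).choose (a+j) : ℚ) * (b2 (a+j) j : ℚ)
              * ((-1:ℚ)^((a-j)-i) * (((t-1-j).choose i : ℚ))
                  * (((t-1-j)-1-i).choose ((a-j)-i) : ℚ)) := by
          intro i hi
          simp only [Finset.mem_range] at hi
          have htri := Nat.choose_mul (n := a+t-1) (k := a+(j+i)) (s := a+j)
            (by omega)
          have h1 : a+(j+i) - (a+j) = i := by omega
          have h2 : a+t-1 - (a+j) = t-1-j := by omega
          rw [h1, h2] at htri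
          have h3 : a-(j+i) = (a-j)-i := by omega
          have h4 : t-(j+i)-2 = (t-1-j)-1-i := by omega
          rw [show a+(j+i) = a+j+i by ring] at htri
          have htriq : (((a+t-1).choose (a+j+i) : ℚ)) * (((a+j+i).choose (a+j) : ℚ))
              = (((a+t-1).choose (a+j) : ℚ)) * (((t-1-j).choose i : ℚ)) := by
            exact_mod_cast congrArg (fun n : ℕ => (n : ℚ)) htri
          simp only [show a+(j+i) = a+j+i from by ring]
          push_cast [h3, h4]
          linear_combination ((-1:ℚ)^(a-j-i) * ((t-1-j-1-i).choose (a-j-i) : ℚ)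
            * (b2 (a+j) j : ℚ)) * htriq
        rw [Finset.sum_congr rfl hper, ← Finset.mul_sum]
        rw [show a+1-j = (a-j)+1 by omega, W1 (a-j) (t-1-j) (by omega), mul_one]
    _ = (St (a+t-1) (t-1) : ℚ) := by
        have hE := EXP a (t-1)
        rw [show a+(t-1) = a+t-1 by omega] at hE
        rw [hE, Nat.cast_sum]
        apply Finset.sum_congr rfl
        intro j _
        push_cast
        ring

lemma absorbQ (n m : ℕ) : (n.choose (m+1) : ℚ) * (m+1) = (n.choose m : ℚ) * ((n:ℚ) - m) := by
  rcases le_or_gt m n with hm | hm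
  · have := Nat.choose_succ_right_eq n m
    have hq : ((n.choose (m+1) * (m+1) : ℕ) : ℚ) = ((n.choose m * (n-m) : ℕ) : ℚ) := by
      exact_mod_cast congrArg (fun k : ℕ => (k:ℚ)) this
    push_cast [hm] at hq
    linarith
  · rw [Nat.choose_eq_zero_of_lt hm, Nat.choose_eq_zero_of_lt (by omega)]
    simp

lemma pow_eq_sum (n m : ℕ) :
    ((m:ℚ))^n = ∑ e ∈ range (n+1), (m.choose e : ℚ) * (e.factorial * St n e) := by
  induction n with
  | zero => simp
  | succ n ih =>
    have habs : ∀ e : ℕ, (m:ℚ) * (m.choose e : ℚ)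
        = e * (m.choose e : ℚ) + (m.choose (e+1) : ℚ) * (e+1) := by
      intro e
      rw [absorbQ]
      ring
    calc ((m:ℚ))^(n+1) = (∑ e ∈ range (n+1), (m.choose e : ℚ) * (e.factorial * St n e)) * m := by
          rw [← ih, pow_succ]
      _ = (∑ e ∈ range (n+1), (e:ℚ) * (m.choose e : ℚ) * (e.factorial * St n e))
          + ∑ e ∈ range (n+1), ((m.choose (e+1) : ℚ) * (e+1)) * (e.factorial * St n e) := by
          rw [Finset.sum_mul, ← Finset.sum_add_distrib]
          apply Finset.sum_congr rfl
          intro e _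
          linear_combination ((e.factorial : ℚ) * (St n e : ℚ)) * habs e
      _ = (∑ e ∈ range (n+2), (e:ℚ) * (m.choose e : ℚ) * (e.factorial * St n e))
          + ∑ e ∈ range (n+1), ((m.choose (e+1) : ℚ) * (e+1)) * (e.factorial * St n e) := by
          rw [Finset.sum_range_succ _ (n+1)]
          rw [St_eq_zero_of_lt (by omega : n < n+1)]
          push_cast
          ring
      _ = ∑ e ∈ range (n+2), (m.choose e : ℚ) * (e.factorial * St (n+1) e) := by
          rw [Finset.sum_range_succ' (fun e => (m.choose e : ℚ) * (e.factorial * St (n+1) e)) (n+1)]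
          rw [Finset.sum_range_succ' (fun e => (e:ℚ) * (m.choose e : ℚ) * (e.factorial * St n e)) (n+1)]
          simp only [Nat.cast_zero, zero_mul, add_zero, St_succ_zero, Nat.cast_ofNat]
          have : ∀ i ∈ range (n+1),
              (((i+1:ℕ)):ℚ) * (m.choose (i+1) : ℚ) * ((i+1).factorial * St n (i+1))
              + ((m.choose (i+1) : ℚ) * (i+1)) * (i.factorial * St n i)
              = (m.choose (i+1) : ℚ) * ((i+1).factorial * St (n+1) (i+1)) := by
            intro i _
            rw [St_succ_succ, Nat.factorial_succ]
            push_cast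
            ring
          rw [← Finset.sum_add_distrib, Finset.sum_congr rfl this]
          simp

lemma alt_sum_Q (n : ℕ) :
    ∑ i ∈ range (n+1), (-1:ℚ)^i * (n.choose i) = if n = 0 then 1 else 0 := by
  have := Int.alternating_sum_range_choose (n := n)
  have hc := congrArg (fun z : ℤ => (z : ℚ)) this
  push_cast at hc
  rw [hc]

lemma orth (e k : ℕ) :
    ∑ f ∈ range (e+1), (-1:ℚ)^f * (e.choose f) * (f.choose k)
      = if k = e then (-1:ℚ)^e else 0 := by
  rcases lt_or_ge e k with hlt | hle
  · rw [if_neg (by omega), Finset.sum_eq_zero]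
    intro f hf
    simp only [Finset.mem_range] at hf
    rw [Nat.choose_eq_zero_of_lt (by omega : f < k)]
    ring
  · have hsplit : ∑ f ∈ range k, (-1:ℚ)^f * (e.choose f) * (f.choose k)
        + ∑ f ∈ Finset.Ico k (e+1), (-1:ℚ)^f * (e.choose f) * (f.choose k)
        = ∑ f ∈ range (e+1), (-1:ℚ)^f * (e.choose f) * (f.choose k) :=
      Finset.sum_range_add_sum_Ico _ (by omega)
    rw [← hsplit, Finset.sum_eq_zero (fun f hf => by
        simp only [Finset.mem_range] at hf
        rw [Nat.choose_eq_zero_of_lt (by omega : f < k)]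
        ring), zero_add, Finset.sum_Ico_eq_sum_range]
    have hper : ∀ i ∈ range (e+1-k),
        (-1:ℚ)^(k+i) * (e.choose (k+i)) * ((k+i).choose k)
        = ((-1:ℚ)^k * (e.choose k)) * ((-1:ℚ)^i * ((e-k).choose i)) := by
      intro i hi
      simp only [Finset.mem_range] at hi
      have htri := Nat.choose_mul (n := e) (k := k+i) (s := k) (by omega)
      rw [show k+i-k = i by omega] at htri
      have htq : ((e.choose (k+i)) : ℚ) * ((k+i).choose k : ℚ)
          = ((e.choose k) : ℚ) * ((e-k).choose i : ℚ) := by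
        exact_mod_cast congrArg (fun z : ℕ => (z:ℚ)) htri
      rw [pow_add]
      linear_combination ((-1:ℚ)^k * (-1:ℚ)^i) * htq
    rw [Finset.sum_congr rfl hper, ← Finset.mul_sum]
    rw [show e+1-k = (e-k)+1 by omega, alt_sum_Q]
    by_cases hek : k = e
    · subst hek
      simp
    · rw [if_neg (by omega : ¬ e-k = 0), if_neg hek, mul_zero]

lemma INNER (n e : ℕ) :
    ∑ f ∈ range (e+1), (-1:ℚ)^f * (e.choose f) * (f:ℚ)^n
      = (-1:ℚ)^e * e.factorial * St n e := by
  calc ∑ f ∈ range (e+1), (-1:ℚ)^f * (e.choose f) * (f:ℚ)^n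
      = ∑ f ∈ range (e+1), ∑ c ∈ range (n+1),
          ((c.factorial * St n c : ℚ)) * ((-1:ℚ)^f * (e.choose f) * (f.choose c)) := by
        apply Finset.sum_congr rfl
        intro f _
        rw [pow_eq_sum n f, Finset.mul_sum]
        apply Finset.sum_congr rfl
        intro c _
        ring
    _ = ∑ c ∈ range (n+1), ((c.factorial * St n c : ℚ))
          * ∑ f ∈ range (e+1), ((-1:ℚ)^f * (e.choose f) * (f.choose c)) := by
        rw [Finset.sum_comm]
        apply Finset.sum_congr rfl
        intro c _
        rw [Finset.mul_sum]
    _ = ∑ c ∈ range (n+1), ((c.factorial * St n c : ℚ)) * (if c = e then (-1:ℚ)^e else 0) := by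
        apply Finset.sum_congr rfl
        intro c _
        rw [orth e c]
    _ = (-1:ℚ)^e * e.factorial * St n e := by
        simp only [mul_ite, mul_zero]
        rw [Finset.sum_ite_eq' (range (n+1)) e]
        by_cases he : e ∈ range (n+1)
        · rw [if_pos he]
          ring
        · rw [if_neg he]
          simp only [Finset.mem_range] at he
          rw [St_eq_zero_of_lt (by omega : n < e)]
          simp

noncomputable def Pp (a : ℕ) : Polynomial ℚ :=
  ∑ e ∈ Finset.range (a+1),
    Polynomial.C ((-1:ℚ)^(a+e) * (St (a+e) e : ℚ) / ((a+e).factorial * (a-e).factorial))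
      * ((descPochhammer ℚ (a+e)).comp (Polynomial.X + Polynomial.C (e:ℚ)))
      * ((descPochhammer ℚ (a-e)).comp (Polynomial.X + Polynomial.C ((a:ℚ)+1)))

lemma Pp_eval (a : ℕ) (z : ℚ) :
    (Pp a).eval z = ∑ e ∈ Finset.range (a+1),
      ((-1:ℚ)^(a+e) * (St (a+e) e : ℚ) / ((a+e).factorial * (a-e).factorial))
        * ((descPochhammer ℚ (a+e)).eval (z + e))
        * ((descPochhammer ℚ (a-e)).eval (z + (a+1))) := by
  rw [Pp, Polynomial.eval_finset_sum]
  apply Finset.sum_congr rfl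
  intro e _
  simp [Polynomial.eval_mul, Polynomial.eval_comp]

lemma desc_eval_neg (k s : ℕ) :
    (descPochhammer ℚ k).eval (-(s:ℚ)) = (-1:ℚ)^k * ((s+k-1).descFactorial k : ℚ) := by
  cases k with
  | zero => simp
  | succ k =>
    have harg : (-(s:ℚ)) - ((k+1 : ℕ) : ℚ) + 1 = -(((s+k : ℕ)) : ℚ) := by
      push_cast
      ring
    rw [descPochhammer_eval_eq_ascPochhammer, harg,
      ascPochhammer_eval_neg_eq_descPochhammer,
      descPochhammer_eval_eq_descFactorial, show s+(k+1)-1 = s+k from by omega]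

lemma F1 (a e t : ℕ) (ht : 1 ≤ t) :
    (descPochhammer ℚ (a+e)).eval ((-(t:ℚ)) + e)
      = (-1:ℚ)^(a+e) * ((a+e).factorial : ℚ) * ((a+t-1).choose (a+e) : ℚ) := by
  rcases le_or_gt t e with hte | het
  · have harg : (-(t:ℚ)) + e = (((e - t : ℕ)) : ℚ) := by
      push_cast [Nat.cast_sub hte]
      ring
    rw [harg, descPochhammer_eval_eq_descFactorial,
      Nat.descFactorial_eq_zero_iff_lt.mpr (by omega : e - t < a+e),
      Nat.choose_eq_zero_of_lt (by omega : a+t-1 < a+e)]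
    simp
  · have harg : (-(t:ℚ)) + e = -(((t - e : ℕ)) : ℚ) := by
      push_cast [Nat.cast_sub het.le]
      ring
    rw [harg, desc_eval_neg, show (t-e) + (a+e) - 1 = a+t-1 from by omega,
      Nat.descFactorial_eq_factorial_mul_choose]
    push_cast
    ring

lemma F2a (a e t : ℕ) (ht : t ≤ a+1) :
    (descPochhammer ℚ (a-e)).eval ((-(t:ℚ)) + (a+1))
      = ((a-e).factorial : ℚ) * ((a+1-t).choose (a-e) : ℚ) := by
  have harg : (-(t:ℚ)) + (a+1) = (((a+1-t : ℕ)) : ℚ) := by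
    push_cast [Nat.cast_sub ht]
    ring
  rw [harg, descPochhammer_eval_eq_descFactorial,
    Nat.descFactorial_eq_factorial_mul_choose]
  push_cast
  ring

lemma F2b (a e t : ℕ) (ht : a+2 ≤ t) (he : e ≤ a) :
    (descPochhammer ℚ (a-e)).eval ((-(t:ℚ)) + (a+1))
      = (-1:ℚ)^(a-e) * ((a-e).factorial : ℚ) * ((t-e-2).choose (a-e) : ℚ) := by
  have harg : (-(t:ℚ)) + (a+1) = -(((t-a-1 : ℕ)) : ℚ) := by
    rw [show t-a-1 = t-(a+1) from by omega]
    push_cast [Nat.cast_sub (by omega : a+1 ≤ t)]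
    ring
  rw [harg, desc_eval_neg, show (t-a-1) + (a-e) - 1 = t-e-2 from by omega,
    Nat.descFactorial_eq_factorial_mul_choose]
  push_cast
  ring

lemma neg_one_sq_pow (n : ℕ) : (-1:ℚ)^n * (-1:ℚ)^n = 1 := by
  rw [← pow_add, ← two_mul, pow_mul]
  norm_num

lemma Pp_eval_nat (a x : ℕ) :
    (Pp a).eval (x:ℚ) = ∑ e ∈ Finset.range (a+1),
      (-1:ℚ)^(a+e) * (St (a+e) e : ℚ) * ((x+e).choose (a+e) : ℚ)
        * ((x+a+1).choose (a-e) : ℚ) := by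
  rw [Pp_eval]
  apply Finset.sum_congr rfl
  intro e _
  have h1 : ((x:ℚ)) + e = (((x+e:ℕ)) : ℚ) := by push_cast; ring
  have h2 : ((x:ℚ)) + (a+1) = (((x+a+1:ℕ)) : ℚ) := by push_cast; ring
  rw [h1, h2, descPochhammer_eval_eq_descFactorial, descPochhammer_eval_eq_descFactorial,
    Nat.descFactorial_eq_factorial_mul_choose, Nat.descFactorial_eq_factorial_mul_choose]
  have hf1 : ((a+e).factorial : ℚ) ≠ 0 := by positivity
  have hf2 : ((a-e).factorial : ℚ) ≠ 0 := by positivity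
  field_simp
  push_cast
  ring

lemma Pp_eval_neg (a t : ℕ) (ht : 1 ≤ t) :
    (Pp a).eval (-(t:ℚ)) = (St (a+t-1) (t-1) : ℚ) := by
  rw [Pp_eval]
  have hf : ∀ e : ℕ, ((a+e).factorial : ℚ) ≠ 0 ∧ ((a-e).factorial : ℚ) ≠ 0 := by
    intro e
    constructor <;> positivity
  rcases le_or_gt t (a+1) with hta | hta
  · -- t ≤ a+1 : use DUAL1 with N = a+t-1
    have hstep : ∀ e ∈ range (a+1),
        ((-1:ℚ)^(a+e) * (St (a+e) e : ℚ) / ((a+e).factorial * (a-e).factorial))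
          * ((descPochhammer ℚ (a+e)).eval ((-(t:ℚ)) + e))
          * ((descPochhammer ℚ (a-e)).eval ((-(t:ℚ)) + (a+1)))
        = ((a+t-1).choose (a+e) : ℚ) * ((2*a-(a+t-1)).choose (a-e) : ℚ) * (St (a+e) e : ℚ) := by
      intro e he
      rw [F1 a e t ht, F2a a e t hta, show 2*a-(a+t-1) = a+1-t from by omega]
      have := neg_one_sq_pow (a+e)
      field_simp [(hf e).1, (hf e).2]
      linear_combination (((a+t-1).choose (a+e) : ℚ) * ((a+1-t).choose (a-e) : ℚ)
        * (St (a+e) e : ℚ)) * this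
    rw [Finset.sum_congr rfl hstep]
    have hD := DUAL1 a (a+t-1) (by omega) (by omega)
    have hDq := congrArg (fun z : ℕ => (z:ℚ)) hD
    push_cast at hDq
    rw [show a+t-1-a = t-1 from by omega] at hDq
    rw [← hDq]
  · -- t ≥ a+2 : use DUAL2
    have hstep : ∀ e ∈ range (a+1),
        ((-1:ℚ)^(a+e) * (St (a+e) e : ℚ) / ((a+e).factorial * (a-e).factorial))
          * ((descPochhammer ℚ (a+e)).eval ((-(t:ℚ)) + e))
          * ((descPochhammer ℚ (a-e)).eval ((-(t:ℚ)) + (a+1)))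
        = (-1:ℚ)^(a-e) * ((a+t-1).choose (a+e) : ℚ)
            * ((t-e-2).choose (a-e) : ℚ) * (St (a+e) e : ℚ) := by
      intro e he
      simp only [Finset.mem_range] at he
      rw [F1 a e t ht, F2b a e t (by omega) (by omega)]
      have := neg_one_sq_pow (a+e)
      field_simp [(hf e).1, (hf e).2]
      linear_combination (((a+t-1).choose (a+e) : ℚ)
        * ((t-e-2).choose (a-e) : ℚ) * (St (a+e) e : ℚ)) * this
    rw [Finset.sum_congr rfl hstep]
    exact DUAL2 a t (by omega)

lemma Pp_eval_nat_zero (a x : ℕ) (h : x < a) : (Pp a).eval (x:ℚ) = 0 := by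
  rw [Pp_eval_nat, Finset.sum_eq_zero]
  intro e _
  rw [Nat.choose_eq_zero_of_lt (by omega : x+e < a+e)]
  ring

lemma Qzero (a : ℕ) :
    (Pp (a+1)).comp (Polynomial.X + 1) - Pp (a+1) - (Polynomial.X + 1) * Pp a = 0 := by
  apply Polynomial.eq_zero_of_infinite_isRoot
  apply Set.infinite_of_injective_forall_mem (f := fun t : ℕ => -((t:ℚ)+1))
  · intro s t hst
    simp only [neg_inj, add_left_inj, Nat.cast_inj] at hst
    exact hst
  · intro t
    simp only [Set.mem_setOf_eq, Polynomial.IsRoot, Polynomial.eval_sub, Polynomial.eval_mul,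
      Polynomial.eval_comp, Polynomial.eval_add, Polynomial.eval_X, Polynomial.eval_one]
    have h2 : (-((t:ℚ)+1)) = -(((t+1:ℕ)):ℚ) := by push_cast; ring
    have h1 : (-((t:ℚ)+1) + 1) = -((t:ℕ):ℚ) := by push_cast; ring
    rw [h1, h2, Pp_eval_neg (a+1) (t+1) (by omega), Pp_eval_neg a (t+1) (by omega)]
    rw [show a+1+(t+1)-1 = a+t+1 from by omega, show t+1-1 = t from rfl,
      show a+(t+1)-1 = a+t from by omega]
    rcases Nat.eq_zero_or_pos t with rfl | htpos
    · have h0 : (-((0:ℕ):ℚ)) = ((0:ℕ):ℚ) := by norm_num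
      rw [h0, Pp_eval_nat_zero (a+1) 0 (by omega)]
      simp
    · rw [Pp_eval_neg (a+1) t (by omega), show a+1+t-1 = a+t from by omega]
      have hrec : St (a+t+1) t = t * St (a+t) t + St (a+t) (t-1) := by
        have := St_succ_succ (a+t) (t-1)
        rw [show t-1+1 = t from by omega] at this
        rw [this]
      rw [hrec]
      push_cast [Nat.cast_sub (by omega : 1 ≤ t)]
      ring
  
lemma KEYnat (a x : ℕ) :
    (Pp (a+1)).eval ((x:ℚ)+1) = (Pp (a+1)).eval (x:ℚ) + ((x:ℚ)+1) * (Pp a).eval (x:ℚ) := by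
  have h := congrArg (Polynomial.eval ((x:ℚ))) (Qzero a)
  simp only [Polynomial.eval_sub, Polynomial.eval_mul, Polynomial.eval_comp,
    Polynomial.eval_add, Polynomial.eval_X, Polynomial.eval_one, Polynomial.eval_zero] at h
  linarith

lemma A_diag (x : ℕ) : A x x = 1 := by
  unfold A
  have hm : (∏ k ∈ range x, (Polynomial.X + Polynomial.C ((k:ℚ)+1))).Monic :=
    Polynomial.monic_prod_of_monic _ _ (fun k _ => Polynomial.monic_X_add_C _)
  have hd : (∏ k ∈ range x, (Polynomial.X + Polynomial.C ((k:ℚ)+1))).natDegree = x := by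
    rw [Polynomial.natDegree_prod_of_monic _ _ (fun k _ => Polynomial.monic_X_add_C _)]
    have hone : ∀ i ∈ range x, (Polynomial.X + Polynomial.C ((i:ℚ)+1)).natDegree = 1 :=
      fun i _ => Polynomial.natDegree_X_add_C _
    rw [Finset.sum_congr rfl hone]
    simp
  have := hm.coeff_natDegree
  rwa [hd] at this

lemma A_succ (x b : ℕ) : A (x+1) (b+1) = A x b + ((x:ℚ)+1) * A x (b+1) := by
  unfold A
  rw [Finset.prod_range_succ]
  have : (∏ k ∈ range x, (Polynomial.X + Polynomial.C ((k:ℚ)+1)))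
      * (Polynomial.X + Polynomial.C ((x:ℚ)+1))
      = (∏ k ∈ range x, (Polynomial.X + Polynomial.C ((k:ℚ)+1))) * Polynomial.X
        + Polynomial.C ((x:ℚ)+1) * (∏ k ∈ range x, (Polynomial.X + Polynomial.C ((k:ℚ)+1))) := by
    ring
  rw [this, Polynomial.coeff_add, Polynomial.coeff_mul_X, Polynomial.coeff_C_mul]

lemma A_succ_zero (x : ℕ) : A (x+1) 0 = ((x:ℚ)+1) * A x 0 := by
  unfold A
  rw [Finset.prod_range_succ, Polynomial.mul_coeff_zero]
  simp [Polynomial.coeff_add, Polynomial.coeff_X_zero, Polynomial.coeff_C]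
  ring

lemma main_eq : ∀ x : ℕ, ∀ a : ℕ, a ≤ x → A x (x-a) = (Pp a).eval (x:ℚ) := by
  intro x
  induction x with
  | zero =>
    intro a ha
    have : a = 0 := by omega
    subst this
    rw [Pp_eval_nat]
    unfold A
    simp
  | succ x ih =>
    intro a ha
    cases a with
    | zero =>
      rw [Nat.sub_zero, A_diag, Pp_eval_nat]
      simp
    | succ a =>
      rcases lt_or_eq_of_le ha with hlt | heq
      · -- a+1 ≤ x
        have hax : a+1 ≤ x := by omega
        have hb : x+1-(a+1) = (x-(a+1))+1 := by omega
        have hb2 : x-(a+1)+1 = x-a := by omega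
        rw [hb, A_succ x (x-(a+1)), hb2, ih (a+1) hax, ih a (by omega)]
        have := (KEYnat a x).symm
        push_cast
        rw [← this]
      · -- a+1 = x+1, i.e. a = x
        have hax : a = x := by omega
        subst hax
        rw [Nat.sub_self, A_succ_zero]
        have hA := ih a le_rfl
        rw [Nat.sub_self] at hA
        rw [hA]
        have hK := KEYnat a a
        rw [Pp_eval_nat_zero (a+1) a (by omega)] at hK
        push_cast
        rw [hK]
        ring

theorem stmt9 (a x : ℕ) (h : a ≤ x) :
    A x (x - a)
      = ∑ e ∈ Finset.range (a + 1), ∑ f ∈ Finset.range (e + 1),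
          (-1 : ℚ) ^ (f + a) * (e.choose f : ℚ) * ((x + e).choose (a + e) : ℚ)
            * ((x + a + 1).choose (a - e) : ℚ) * (f : ℚ) ^ (a + e) / (e.factorial : ℚ) := by
  rw [main_eq x a h, Pp_eval_nat]
  apply Finset.sum_congr rfl
  intro e _
  have hef : ((e.factorial : ℚ)) ≠ 0 := by positivity
  have hin := INNER (a+e) e
  calc (-1:ℚ)^(a+e) * (St (a+e) e : ℚ) * ((x+e).choose (a+e) : ℚ) * ((x+a+1).choose (a-e) : ℚ)
      = ((-1:ℚ)^a * ((x+e).choose (a+e) : ℚ) * ((x+a+1).choose (a-e) : ℚ) / e.factorial)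
          * ((-1:ℚ)^e * e.factorial * St (a+e) e) := by
        rw [pow_add]
        field_simp
    _ = ((-1:ℚ)^a * ((x+e).choose (a+e) : ℚ) * ((x+a+1).choose (a-e) : ℚ) / e.factorial)
          * ∑ f ∈ range (e+1), (-1:ℚ)^f * (e.choose f) * (f:ℚ)^(a+e) := by rw [hin]
    _ = ∑ f ∈ Finset.range (e + 1),
          (-1 : ℚ) ^ (f + a) * (e.choose f : ℚ) * ((x + e).choose (a + e) : ℚ)
            * ((x + a + 1).choose (a - e) : ℚ) * (f : ℚ) ^ (a + e) / (e.factorial : ℚ) := by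
        rw [Finset.mul_sum]
        apply Finset.sum_congr rfl
        intro f _
        rw [pow_add]
        field_simp
        ring
end
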